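/- Let θ ∈ (0, 1/2), let f : [0,∞) → [0,∞) be continuous, and let a : [0,1] → [0,∞) be continuous with α = ∫₀¹ a(t) dt satisfying 0 < α < 1; set β = ∫_θ^{1−θ} a(t) dt. Define the cone K = { u ∈ C([0,1],ℝ) : u ≥ 0 and min_{t∈[θ,1−θ]} u(t) ≥ θ³ (1−α+β) ‖u‖ } (with ‖u‖ the sup norm) and the operator A by (Au)(t) = ∫₀¹ ( G(t,s) + (1/(1-α)) ∫₀¹ a(τ) G(τ,s) dτ ) f(u(s)) ds. Then A maps K into K. -/
import Mathlib

/-- The Green's function of the fourth-order problem. -/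
noncomputable def G (t s : ℝ) : ℝ :=
  if s ≤ t then (t ^ 3 * (1 - s) ^ 2 - (t - s) ^ 3) / 6
  else t ^ 3 * (1 - s) ^ 2 / 6

/-- The sup norm on `[0,1]` of a function `u : ℝ → ℝ`. -/
noncomputable def supNorm (u : ℝ → ℝ) : ℝ := ⨆ t : Set.Icc (0 : ℝ) 1, |u t|

lemma G_eq (t s : ℝ) : G t s = (t ^ 3 * (1 - s) ^ 2 - max (t - s) 0 ^ 3) / 6 := by
  unfold G
  rcases le_or_gt s t with h | h
  · rw [if_pos h, max_eq_left (by linarith)]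
  · rw [if_neg (not_le.mpr h), max_eq_right (by linarith)]
    ring

lemma G_cont : Continuous (fun p : ℝ × ℝ => G p.1 p.2) := by
  simp only [G_eq]; fun_prop

lemma G_nonneg {t s : ℝ} (ht : t ∈ Set.Icc (0:ℝ) 1) (hs : s ∈ Set.Icc (0:ℝ) 1) :
    0 ≤ G t s := by
  obtain ⟨ht0, ht1⟩ := ht; obtain ⟨hs0, hs1⟩ := hs
  unfold G
  split_ifs with h
  · have h1 : t - s ≤ t * (1 - s) := by nlinarith
    have h2 : (t - s)^3 ≤ (t*(1-s))^3 := pow_le_pow_left₀ (by linarith) h1 3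
    have e : (t*(1-s))^3 = t^3*(1-s)^2*(1-s) := by ring
    have h3 : t^3*(1-s)^2*(1-s) ≤ t^3*(1-s)^2 := by
      nlinarith [mul_nonneg (pow_nonneg ht0 3) (sq_nonneg (1-s))]
    linarith [h2.trans_eq e |>.trans h3]
  · positivity

lemma G1_eq {s : ℝ} (hs1 : s ≤ 1) : G 1 s = s * (1 - s)^2 / 6 := by
  unfold G; rw [if_pos hs1]; ring

lemma G_le_G1 {t s : ℝ} (ht : t ∈ Set.Icc (0:ℝ) 1) (hs : s ∈ Set.Icc (0:ℝ) 1) :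
    G t s ≤ G 1 s := by
  obtain ⟨ht0, ht1⟩ := ht; obtain ⟨hs0, hs1⟩ := hs
  rw [G1_eq hs1]
  unfold G
  split_ifs with h
  · have h1 : t - s ≤ t*(1-s) := by nlinarith
    have h2 : (t-s)^2 ≤ (t*(1-s))^2 := pow_le_pow_left₀ (by linarith) h1 2
    have h3 : (1-s)*(t-s) ≤ (1-s)*(t*(1-s)) := mul_le_mul_of_nonneg_left h1 (by linarith)
    have inner : 0 ≤ (t+t^2)*(1-s)^2 - (1-s)*(t-s) - (t-s)^2 := by nlinarith
    nlinarith [mul_nonneg (sub_nonneg.mpr ht1) inner]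
  · push_neg at h
    have ht3 : t^3 ≤ t := by
      nlinarith [mul_nonneg (mul_nonneg ht0 (by linarith : (0:ℝ) ≤ 1 - t)) (by linarith : (0:ℝ) ≤ 1 + t)]
    nlinarith [mul_nonneg (by linarith : (0:ℝ) ≤ s - t^3) (sq_nonneg (1-s))]

lemma G_lower {θ t s : ℝ} (hθ0 : 0 ≤ θ) (hθt : θ ≤ t) (ht1 : t ≤ 1)
    (hs : s ∈ Set.Icc (0:ℝ) 1) : θ^3 * G 1 s ≤ G t s := by
  obtain ⟨hs0, hs1⟩ := hs
  have ht0 : 0 ≤ t := le_trans hθ0 hθt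
  have hθ3 : θ^3 ≤ t^3 := pow_le_pow_left₀ hθ0 hθt 3
  have hG1 : 0 ≤ G 1 s := G_nonneg (by norm_num) ⟨hs0, hs1⟩
  have key : t^3 * G 1 s ≤ G t s := by
    rw [G1_eq hs1]
    unfold G
    split_ifs with h
    · have h1 : t - s ≤ t * (1 - s) := by nlinarith
      have h2 : (t - s)^3 ≤ (t*(1-s))^3 := pow_le_pow_left₀ (by linarith) h1 3
      nlinarith
    · push_neg at h
      nlinarith [mul_nonneg (mul_nonneg (pow_nonneg ht0 3) (sq_nonneg (1-s))) (by linarith : (0:ℝ) ≤ 1 - s)]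
  calc θ^3 * G 1 s ≤ t^3 * G 1 s := by nlinarith
    _ ≤ G t s := key

theorem stmt_12 (θ : ℝ) (hθ : θ ∈ Set.Ioo (0 : ℝ) (1 / 2)) (f a : ℝ → ℝ)
    (hf : ContinuousOn f (Set.Ici 0))
    (hf0 : ∀ v ∈ Set.Ici (0 : ℝ), 0 ≤ f v)
    (ha : ContinuousOn a (Set.Icc 0 1))
    (ha0 : ∀ t ∈ Set.Icc (0 : ℝ) 1, 0 ≤ a t)
    (hα0 : 0 < ∫ t in (0 : ℝ)..1, a t)
    (hα1 : (∫ t in (0 : ℝ)..1, a t) < 1)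
    (u Au : ℝ → ℝ)
    -- `u` belongs to the cone `K`
    (hu : ContinuousOn u (Set.Icc 0 1))
    (hu0 : ∀ t ∈ Set.Icc (0 : ℝ) 1, 0 ≤ u t)
    (huK : ∀ t ∈ Set.Icc θ (1 - θ),
      θ ^ 3 * (1 - (∫ τ in (0 : ℝ)..1, a τ) + ∫ τ in θ..(1 - θ), a τ) *
        supNorm u ≤ u t)
    (hAu : ∀ t, Au t = ∫ s in (0 : ℝ)..1,
      (G t s + (1 / (1 - ∫ τ in (0 : ℝ)..1, a τ)) *
        ∫ τ in (0 : ℝ)..1, a τ * G τ s) * f (u s)) :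
    -- then `Au` belongs to the cone `K`
    ContinuousOn Au (Set.Icc 0 1) ∧
    (∀ t ∈ Set.Icc (0 : ℝ) 1, 0 ≤ Au t) ∧
    ∀ t ∈ Set.Icc θ (1 - θ),
      θ ^ 3 * (1 - (∫ τ in (0 : ℝ)..1, a τ) + ∫ τ in θ..(1 - θ), a τ) *
        supNorm Au ≤ Au t := by
  obtain ⟨hθ0, hθ2⟩ := hθ
  have h01 : (0:ℝ) ≤ 1 := zero_le_one
  set α : ℝ := ∫ τ in (0:ℝ)..1, a τ with hαdef
  set β : ℝ := ∫ τ in θ..(1-θ), a τ with hβdef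
  set C : ℝ := 1 / (1 - α) with hCdef
  have h1α : (0:ℝ) < 1 - α := by linarith
  have hC0 : 0 ≤ C := by positivity
  -- projection
  set pr : ℝ → ℝ := fun x => (Set.projIcc (0:ℝ) 1 h01 x : ℝ) with hprdef
  have hprc : Continuous pr := continuous_subtype_val.comp (continuous_projIcc)
  have hprmem : ∀ x, pr x ∈ Set.Icc (0:ℝ) 1 := fun x => (Set.projIcc (0:ℝ) 1 h01 x).2
  have hpr_eq : ∀ x ∈ Set.Icc (0:ℝ) 1, pr x = x := by
    intro x hx
    simp only [hprdef, Set.projIcc_of_mem h01 hx]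
  -- continuous extensions
  set ut : ℝ → ℝ := fun s => u (pr s) with hutdef
  set a' : ℝ → ℝ := fun τ => a (pr τ) with ha'def
  set fu : ℝ → ℝ := fun s => f (ut s) with hfudef
  have hutc : Continuous ut := hu.comp_continuous hprc hprmem
  have hut0 : ∀ s, 0 ≤ ut s := fun s => hu0 _ (hprmem s)
  have hfuc : Continuous fu := hf.comp_continuous hutc (fun s => hut0 s)
  have hfu0 : ∀ s, 0 ≤ fu s := fun s => hf0 _ (hut0 s)
  have ha'c : Continuous a' := ha.comp_continuous hprc hprmem
  have ha'0 : ∀ τ, 0 ≤ a' τ := fun τ => ha0 _ (hprmem τ)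
  -- the averaged kernel
  set c : ℝ → ℝ := fun s => ∫ τ in (0:ℝ)..1, a' τ * G τ s with hcdef
  have hcc : Continuous c := by
    apply intervalIntegral.continuous_parametric_intervalIntegral_of_continuous'
      (f := fun s τ => a' τ * G τ s)
    exact (ha'c.comp continuous_snd).mul (G_cont.comp (continuous_snd.prodMk continuous_fst))
  have hc_eq : ∀ s, (∫ τ in (0:ℝ)..1, a τ * G τ s) = c s := by
    intro s
    refine intervalIntegral.integral_congr fun τ hτ => ?_
    rw [Set.uIcc_of_le h01] at hτ
    simp only [ha'def]
    rw [hpr_eq τ hτ]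
  have hc0 : ∀ s ∈ Set.Icc (0:ℝ) 1, 0 ≤ c s := by
    intro s hs
    exact intervalIntegral.integral_nonneg h01 fun τ hτ =>
      mul_nonneg (ha'0 τ) (G_nonneg hτ hs)
  -- the full integrand
  set F : ℝ → ℝ → ℝ := fun t s => (G t s + C * c s) * fu s with hFdef
  have hFc : Continuous (Function.uncurry F) :=
    (G_cont.add (continuous_const.mul (hcc.comp continuous_snd))).mul (hfuc.comp continuous_snd)
  have hFtc : ∀ t, Continuous (F t) := fun t => hFc.comp (Continuous.prodMk_right t)
  have hFint : ∀ t : ℝ, IntervalIntegrable (F t) MeasureTheory.volume 0 1 :=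
    fun t => (hFtc t).intervalIntegrable 0 1
  have hAu' : ∀ t, Au t = ∫ s in (0:ℝ)..1, F t s := by
    intro t
    rw [hAu t]
    refine intervalIntegral.integral_congr fun s hs => ?_
    rw [Set.uIcc_of_le h01] at hs
    have h1 : fu s = f (u s) := by
      simp only [hfudef, hutdef]
      rw [hpr_eq s hs]
    rw [hc_eq s, hFdef]
    simp only
    rw [h1]
  have hAcont : Continuous Au := by
    have : Au = fun t => ∫ s in (0:ℝ)..1, F t s := funext hAu'
    rw [this]
    exact intervalIntegral.continuous_parametric_intervalIntegral_of_continuous' hFc 0 1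
  have hF0 : ∀ t ∈ Set.Icc (0:ℝ) 1, ∀ s ∈ Set.Icc (0:ℝ) 1, 0 ≤ F t s := by
    intro t ht s hs
    exact mul_nonneg (add_nonneg (G_nonneg ht hs) (mul_nonneg hC0 (hc0 s hs))) (hfu0 s)
  have hAu0 : ∀ t ∈ Set.Icc (0:ℝ) 1, 0 ≤ Au t := by
    intro t ht
    rw [hAu' t]
    exact intervalIntegral.integral_nonneg h01 fun s hs => hF0 t ht s hs
  refine ⟨hAcont.continuousOn, hAu0, ?_⟩
  -- the cone inequality
  set M : ℝ := ∫ s in (0:ℝ)..1, F 1 s with hMdef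
  have hAuleM : ∀ t ∈ Set.Icc (0:ℝ) 1, Au t ≤ M := by
    intro t ht
    rw [hAu' t, hMdef]
    refine intervalIntegral.integral_mono_on h01 (hFint t) (hFint 1) fun s hs => ?_
    exact mul_le_mul_of_nonneg_right (by linarith [G_le_G1 ht hs]) (hfu0 s)
  haveI : Nonempty (Set.Icc (0:ℝ) 1) := ⟨⟨0, by norm_num⟩⟩
  have hsup : supNorm Au ≤ M := by
    apply ciSup_le
    rintro ⟨t, ht⟩
    rw [abs_of_nonneg (hAu0 t ht)]
    exact hAuleM t ht
  have hθle : θ ≤ 1 - θ := by linarith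
  have haint : IntervalIntegrable a MeasureTheory.volume 0 1 := by
    apply ContinuousOn.intervalIntegrable
    rwa [Set.uIcc_of_le h01]
  have hβ0 : 0 ≤ β := by
    refine intervalIntegral.integral_nonneg hθle fun τ hτ => ha0 τ ⟨?_, ?_⟩
    · linarith [hτ.1]
    · linarith [hτ.2]
  have hβα : β ≤ α := by
    rw [hβdef, hαdef]
    refine intervalIntegral.integral_mono_interval (by linarith) hθle (by linarith) ?_ haint
    filter_upwards [MeasureTheory.ae_restrict_mem measurableSet_Ioc] with x hx
    exact ha0 x ⟨hx.1.le, hx.2⟩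
  have hk0 : 0 ≤ θ^3 * (1 - α + β) :=
    mul_nonneg (pow_nonneg hθ0.le 3) (by linarith)
  have hk1 : θ^3 * (1 - α + β) ≤ 1 := by
    have hθ31 : θ^3 ≤ 1 := pow_le_one₀ hθ0.le (by linarith)
    nlinarith [pow_nonneg hθ0.le 3]
  intro t ht
  have ht01 : t ∈ Set.Icc (0:ℝ) 1 := ⟨by linarith [ht.1], by linarith [ht.2]⟩
  have step : θ^3 * (1 - α + β) * M ≤ Au t := by
    rw [hAu' t, hMdef, ← intervalIntegral.integral_const_mul]
    refine intervalIntegral.integral_mono_on h01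
      ((continuous_const.mul (hFtc 1)).intervalIntegrable 0 1) (hFint t) fun s hs => ?_
    have hbra : θ^3 * (1 - α + β) * (G 1 s + C * c s) ≤ G t s + C * c s := by
      have hG1 : 0 ≤ G 1 s := G_nonneg (by norm_num) hs
      have hA : θ^3 * (1 - α + β) * G 1 s ≤ G t s := by
        have h1 : θ^3 * (1 - α + β) * G 1 s ≤ θ^3 * G 1 s := by
          nlinarith [mul_nonneg (mul_nonneg (pow_nonneg hθ0.le 3) hG1) (sub_nonneg.mpr hβα)]
        exact h1.trans (G_lower hθ0.le ht.1 ht01.2 hs)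
      have hB : θ^3 * (1 - α + β) * (C * c s) ≤ C * c s := by
        nlinarith [mul_nonneg (sub_nonneg.mpr hk1) (mul_nonneg hC0 (hc0 s hs))]
      nlinarith [hA, hB]
    calc θ^3 * (1 - α + β) * F 1 s = (θ^3 * (1 - α + β) * (G 1 s + C * c s)) * fu s := by
          rw [hFdef]; ring
      _ ≤ (G t s + C * c s) * fu s := mul_le_mul_of_nonneg_right hbra (hfu0 s)
      _ = F t s := rfl
  calc θ^3 * (1 - α + β) * supNorm Au ≤ θ^3 * (1 - α + β) * M :=
        mul_le_mul_of_nonneg_left hsup hk0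
    _ ≤ Au t := step
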